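/- The Gödel–Löb axiom GL is valid in CPL under transitivity: if the converse well-founded accessibility relation ≺ is moreover transitive, then for every context Γ, every world w, and every proposition A, Γ ⊢ (□(□A ⊃ A) ⊃ □A)[w] in the CPL natural deduction system. -/
import Mathlib


/-- Propositions of constructive provability logic over a type `Atom` of atomic
propositions: atoms `Q`, falsehood `⊥`, implication `A ⊃ B`, possibility `◇A`,
and necessity `□A`. -/
inductive Form (Atom : Type) : Type where
  | atom : Atom → Form Atom
  | bot  : Form Atom
  | imp  : Form Atom → Form Atom → Form Atom
  | dia  : Form Atom → Form Atom
  | box  : Form Atom → Form Atom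
  deriving DecidableEq

/-- `¬A` abbreviates `A ⊃ ⊥`. -/
def Form.neg {Atom : Type} (A : Form Atom) : Form Atom := Form.imp A Form.bot

/-- A context is a finite set of judgments `A[w]` pairing a proposition with a world. -/
abbrev Ctx (Atom W : Type) [DecidableEq Atom] [DecidableEq W] := Finset (Form Atom × W)

/-- CPL natural deduction with conclusions at a fixed world `w`, parameterized by
an oracle `O` giving provability at the worlds accessible from `w` (which, by
converse well-foundedness of the accessibility relation, is defined before
provability at `w`).  The rules are: hyp, ⊥E, ⊃I, ⊃E, ◇I, □I, ◇E, □E. -/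
inductive NDInner {Atom W : Type} [DecidableEq Atom] [DecidableEq W]
    (acc : W → W → Prop) (w : W)
    (O : ∀ w', acc w w' → Ctx Atom W → Form Atom → Prop) :
    Ctx Atom W → Form Atom → Prop where
  | hyp (Γ : Ctx Atom W) (A : Form Atom) :
      NDInner acc w O (insert (A, w) Γ) A
  | botE (Γ : Ctx Atom W) (C : Form Atom) :
      NDInner acc w O Γ .bot → NDInner acc w O Γ C
  | impI (Γ : Ctx Atom W) (A B : Form Atom) :
      NDInner acc w O (insert (A, w) Γ) B → NDInner acc w O Γ (.imp A B)
  | impE (Γ : Ctx Atom W) (A B : Form Atom) :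
      NDInner acc w O Γ (.imp A B) → NDInner acc w O Γ A → NDInner acc w O Γ B
  | diaI (Γ : Ctx Atom W) (A : Form Atom) (w' : W) (h : acc w w') :
      O w' h Γ A → NDInner acc w O Γ (.dia A)
  | boxI (Γ : Ctx Atom W) (A : Form Atom) :
      (∀ w' (h : acc w w'), O w' h Γ A) → NDInner acc w O Γ (.box A)
  | diaE (Γ : Ctx Atom W) (A C : Form Atom) :
      NDInner acc w O Γ (.dia A) →
      (∀ w' (h : acc w w'), O w' h Γ A → NDInner acc w O Γ C) →
      NDInner acc w O Γ C
  | boxE (Γ : Ctx Atom W) (A C : Form Atom) :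
      NDInner acc w O Γ (.box A) →
      ((∀ w' (h : acc w w'), O w' h Γ A) → NDInner acc w O Γ C) →
      NDInner acc w O Γ C

/-- The natural deduction judgment `Γ ⊢ A[w]` of tethered constructive
provability logic CPL, defined one world at a time by well-founded recursion
on the converse well-founded accessibility relation `acc` (`≺`). -/
def NDCPL {Atom W : Type} [DecidableEq Atom] [DecidableEq W]
    (acc : W → W → Prop) (hwf : WellFounded (Function.swap acc)) :
    W → Ctx Atom W → Form Atom → Prop :=
  hwf.fix (C := fun _ => Ctx Atom W → Form Atom → Prop)
    (fun w rec => NDInner acc w (fun w' h => rec w' h))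


lemma ndcpl_unfold {Atom W : Type} [DecidableEq Atom] [DecidableEq W]
    (acc : W → W → Prop) (hwf : WellFounded (Function.swap acc)) (w : W) :
    NDCPL (Atom := Atom) acc hwf w
      = NDInner acc w (fun w' _ => NDCPL acc hwf w') := by
  exact hwf.fix_eq _ w

/-- Key Löb lemma: if `S` is a set of worlds closed under `acc`-successors and
`□A ⊃ A` is provable from `Γ` at every world in `S`, then `A` is provable
from `Γ` at every world in `S`. -/
lemma cpl_loeb_key {Atom W : Type} [DecidableEq Atom] [DecidableEq W]
    (acc : W → W → Prop) (hwf : WellFounded (Function.swap acc))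
    (S : W → Prop) (hS : ∀ a b, S a → acc a b → S b)
    (Γ : Ctx Atom W) (A : Form Atom)
    (H : ∀ w', S w' → NDCPL acc hwf w' Γ (Form.imp (Form.box A) A)) :
    ∀ w', S w' → NDCPL acc hwf w' Γ A := by
  intro w
  induction w using hwf.induction with
  | _ w ih =>
    intro hw
    rw [ndcpl_unfold]
    refine NDInner.impE Γ (Form.box A) A ?_ ?_
    · have := H w hw
      rwa [ndcpl_unfold] at this
    · refine NDInner.boxI Γ A (fun w' h => ?_)
      exact ih w' h (hS w w' hw h)

/-- The Gödel–Löb axiom GL is valid in CPL under transitivity: if the converse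
well-founded accessibility relation is moreover transitive, then
`Γ ⊢ (□(□A ⊃ A) ⊃ □A)[w]`. -/
theorem cpl_axiom_GL {Atom W : Type} [DecidableEq Atom] [DecidableEq W]
    (acc : W → W → Prop) (hwf : WellFounded (Function.swap acc))
    (htrans : ∀ a b c : W, acc a b → acc b c → acc a c)
    (Γ : Ctx Atom W) (w : W) (A : Form Atom) :
    NDCPL acc hwf w Γ
      (Form.imp (Form.box (Form.imp (Form.box A) A)) (Form.box A)) := by
  rw [ndcpl_unfold]
  apply NDInner.impI
  set Γ' := insert (Form.box (Form.imp (Form.box A) A), w) Γ with hΓ'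
  refine NDInner.boxE Γ' (Form.imp (Form.box A) A) (Form.box A) ?_ ?_
  · exact NDInner.hyp Γ _
  · intro H
    refine NDInner.boxI Γ' A (fun w' h => ?_)
    exact cpl_loeb_key acc hwf (acc w) (fun a b ha hab => htrans w a b ha hab) Γ' A H w' h
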